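/- arXiv:2605.24502 — 3 statements merged into one kernel-verified Lean document; each statement's English description precedes it below -/
import Mathlib

section
/- Local binarization theorem: Let A ∈ ℝ^{M×N} with singular values satisfying σ_min > 0 and operator norm σ_max, let b ∈ ℝ^M, and define L(θ) = ‖A cos θ − b‖₂² + ‖A sin θ‖₂². For θ ∈ ℝ^N with sin θ ≠ 0, define η(θ) = σ_min² / (2σ_max(σ_max + 2‖A cos θ − b‖₂/‖sin θ‖₂)) and θ̃_i = π·round(θ_i/π). If ‖sin θ‖∞ ≤ η(θ), then L(θ̃) ≤ L(θ) − (1/2)σ_min² ‖sin θ‖₂². -/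
/-!
Rounding `θ` to `θ̃` kills the regulariser `‖A sin θ‖² ≥ σmin² ‖sin θ‖²`, while each `cos θᵢ`
moves to `±1` by `1 - |cos θᵢ| ≤ sin² θᵢ ≤ ‖sin θ‖∞ |sin θᵢ|`. Hence `A cos θ - b` moves by at most
`σmax ‖sin θ‖∞ ‖sin θ‖`, and the bound on `‖sin θ‖∞` makes the resulting increase of the data term
at most half of the regulariser.
-/

open Real Finset

/-- Euclidean (ℓ2) norm of a finite real vector. -/
noncomputable def l2enorm {m : ℕ} (v : Fin m → ℝ) : ℝ := Real.sqrt (∑ j, (v j) ^ 2)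

lemma abs_sub_round_div_mul_le (x : ℝ) {p : ℝ} (hp : 0 < p) :
    |x - round (x / p) * p| ≤ p / 2 := by
  have h : x - round (x / p) * p = (x / p - round (x / p)) * p := by field_simp
  rw [h, abs_mul, abs_of_pos hp]
  nlinarith [abs_sub_round (x / p)]

lemma abs_cos_pi_mul_round_sub_cos_le (x : ℝ) :
    |cos (π * round (x / π)) - cos x| ≤ sin x ^ 2 := by
  set k : ℤ := round (x / π)
  set δ := x - k * π
  have hδ : |δ| ≤ π / 2 := abs_sub_round_div_mul_le x pi_pos
  have hcos_x : cos x = (-1) ^ k * cos δ := by rw [← cos_add_int_mul_pi, sub_add_cancel]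
  have hcos_δ : 0 ≤ cos δ :=
    cos_nonneg_of_neg_pi_div_two_le_of_le (abs_le.mp hδ).1 (abs_le.mp hδ).2
  have hsin_x : sin x ^ 2 = 1 - cos δ ^ 2 := by
    rw [sin_sq, hcos_x, mul_pow, ← sq_abs, abs_neg_one_zpow, one_pow, one_mul]
  calc |cos (π * k) - cos x| = |(-1 : ℝ) ^ k| * |1 - cos δ| := by
        rw [mul_comm, cos_int_mul_pi, hcos_x, ← abs_mul]; ring_nf
    _ = 1 - cos δ := by
        rw [abs_neg_one_zpow, one_mul, abs_of_nonneg (by linarith [cos_le_one δ])]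
    _ ≤ sin x ^ 2 := by nlinarith [cos_le_one δ]

lemma l2enorm_eq_norm {m : ℕ} (v : Fin m → ℝ) : l2enorm v = ‖WithLp.toLp 2 v‖ := by
  simp [l2enorm, EuclideanSpace.norm_eq]

lemma l2enorm_nonneg {m : ℕ} (v : Fin m → ℝ) : 0 ≤ l2enorm v := sqrt_nonneg _

lemma l2enorm_pos {m : ℕ} {v : Fin m → ℝ} (hv : v ≠ 0) : 0 < l2enorm v := by
  rw [l2enorm_eq_norm, norm_pos_iff]
  simpa using hv

lemma l2enorm_zero {m : ℕ} : l2enorm (0 : Fin m → ℝ) = 0 := by simp [l2enorm]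

lemma l2enorm_add_le {m : ℕ} (u v : Fin m → ℝ) : l2enorm (u + v) ≤ l2enorm u + l2enorm v := by
  simpa only [l2enorm_eq_norm, WithLp.toLp_add] using norm_add_le _ _

lemma l2enorm_le_mul_of_abs_le {m : ℕ} {u v : Fin m → ℝ} {c : ℝ} (hc : 0 ≤ c)
    (h : ∀ i, |u i| ≤ c * |v i|) : l2enorm u ≤ c * l2enorm v := by
  have hsum : ∑ i, u i ^ 2 ≤ c ^ 2 * ∑ i, v i ^ 2 := by
    rw [mul_sum]
    refine sum_le_sum fun i _ => ?_
    rw [← sq_abs, ← sq_abs (v i), ← mul_pow]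
    exact pow_le_pow_left₀ (abs_nonneg _) (h i) 2
  calc l2enorm u ≤ √(c ^ 2 * ∑ i, v i ^ 2) := sqrt_le_sqrt hsum
    _ = c * l2enorm v := by rw [sqrt_mul (sq_nonneg c), sqrt_sq hc, l2enorm]

lemma sq_add_mul_le_of_le_div {R S σ η m : ℝ} (hR : 0 ≤ R) (hS : 0 < S) (hσ : 0 < σ)
    (hη₀ : 0 ≤ η) (hη₁ : η ≤ 1) (hη : η ≤ m / (2 * σ * (σ + 2 * R / S))) :
    (R + σ * (η * S)) ^ 2 ≤ R ^ 2 + 1 / 2 * m * S ^ 2 := by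
  have hηm : η * (2 * σ * (σ + 2 * R / S)) ≤ m := (le_div_iff₀ (by positivity)).mp hη
  have hexpand : η * (2 * σ * (σ + 2 * R / S)) * S ^ 2
      = 2 * η * σ ^ 2 * S ^ 2 + 4 * σ * R * η * S := by
    field_simp; ring
  have hη_sq : η ^ 2 * (σ * S) ^ 2 ≤ η * (σ * S) ^ 2 :=
    mul_le_mul_of_nonneg_right (by nlinarith) (sq_nonneg _)
  nlinarith [mul_le_mul_of_nonneg_right hηm (sq_nonneg S)]

lemma l2enorm_mulVec_sub_sq_le {M N : ℕ} (A : Matrix (Fin M) (Fin N) ℝ) (b : Fin M → ℝ)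
    {c c' s : Fin N → ℝ} {σmin σmax η : ℝ} (hσmax : 0 < σmax)
    (hmax : ∀ v : Fin N → ℝ, l2enorm (A.mulVec v) ≤ σmax * l2enorm v) (hs : 0 < l2enorm s)
    (hη₀ : 0 ≤ η) (hη₁ : η ≤ 1) (hd : l2enorm (c' - c) ≤ η * l2enorm s)
    (hη : η ≤ σmin ^ 2 / (2 * σmax * (σmax + 2 * l2enorm (A.mulVec c - b) / l2enorm s))) :
    l2enorm (A.mulVec c' - b) ^ 2
      ≤ l2enorm (A.mulVec c - b) ^ 2 + 1 / 2 * σmin ^ 2 * l2enorm s ^ 2 := by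
  have htriangle :
      l2enorm (A.mulVec c' - b) ≤ l2enorm (A.mulVec c - b) + σmax * (η * l2enorm s) :=
    calc l2enorm (A.mulVec c' - b) = l2enorm ((A.mulVec c - b) + A.mulVec (c' - c)) := by
          rw [Matrix.mulVec_sub, sub_add_sub_cancel']
      _ ≤ l2enorm (A.mulVec c - b) + σmax * l2enorm (c' - c) :=
          (l2enorm_add_le _ _).trans (add_le_add le_rfl (hmax _))
      _ ≤ _ := by gcongr
  calc l2enorm (A.mulVec c' - b) ^ 2
      ≤ (l2enorm (A.mulVec c - b) + σmax * (η * l2enorm s)) ^ 2 := by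
        gcongr; exact l2enorm_nonneg _
    _ ≤ _ := sq_add_mul_le_of_le_div (l2enorm_nonneg _) hs hσmax hη₀ hη₁ hη

theorem local_binarization {M N : ℕ} (A : Matrix (Fin M) (Fin N) ℝ) (b : Fin M → ℝ)
    (σmin σmax : ℝ) (hσ : 0 < σmin)
    (hmin : ∀ v : Fin N → ℝ, σmin * l2enorm v ≤ l2enorm (A.mulVec v))
    (hmax : ∀ v : Fin N → ℝ, l2enorm (A.mulVec v) ≤ σmax * l2enorm v)
    (θ : Fin N → ℝ)
    (hsin : (fun i => Real.sin (θ i)) ≠ 0)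
    (hsup : (⨆ i, |Real.sin (θ i)|)
      ≤ σmin ^ 2 / (2 * σmax * (σmax +
          2 * l2enorm (A.mulVec (fun i => Real.cos (θ i)) - b)
            / l2enorm (fun i => Real.sin (θ i))))) :
    (l2enorm (A.mulVec (fun i => Real.cos (Real.pi * (round (θ i / Real.pi) : ℤ))) - b)) ^ 2
      + (l2enorm (A.mulVec (fun i => Real.sin (Real.pi * (round (θ i / Real.pi) : ℤ))))) ^ 2
    ≤ (l2enorm (A.mulVec (fun i => Real.cos (θ i)) - b)) ^ 2
      + (l2enorm (A.mulVec (fun i => Real.sin (θ i)))) ^ 2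
      - (1 / 2) * σmin ^ 2 * (l2enorm (fun i => Real.sin (θ i))) ^ 2 := by
  set s : Fin N → ℝ := fun i => sin (θ i)
  set η := ⨆ i, |s i|
  have hs : 0 < l2enorm s := l2enorm_pos hsin
  have hs_le : ∀ i, |s i| ≤ η := le_ciSup (Set.finite_range _).bddAbove
  have hη₀ : 0 ≤ η := Real.iSup_nonneg fun i => abs_nonneg _
  have hη₁ : η ≤ 1 := Real.iSup_le (fun i => abs_sin_le_one _) zero_le_one
  have hσmax : 0 < σmax :=
    hσ.trans_le (le_of_mul_le_mul_right ((hmin s).trans (hmax s)) hs)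
  have hd :
      l2enorm ((fun i => cos (π * round (θ i / π))) - fun i => cos (θ i)) ≤ η * l2enorm s :=
    l2enorm_le_mul_of_abs_le hη₀ fun i =>
      calc _ ≤ |s i| * |s i| := by
            simpa [← sq, sq_abs] using abs_cos_pi_mul_round_sub_cos_le (θ i)
        _ ≤ η * |s i| := by gcongr; exact hs_le i
  have hdata := l2enorm_mulVec_sub_sq_le A b hσmax hmax hs hη₀ hη₁ hd hsup
  have hreg : σmin ^ 2 * l2enorm s ^ 2 ≤ l2enorm (A.mulVec s) ^ 2 := by
    rw [← mul_pow]; gcongr; exact hmin s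
  have hsin_round : (fun i => sin (π * round (θ i / π))) = 0 := by
    funext i; rw [mul_comm]; exact sin_int_mul_pi _
  rw [hsin_round, Matrix.mulVec_zero, l2enorm_zero]
  linarith
end

section
/- Under the hypotheses of the local binarization theorem, any global minimizer θ* of L(θ) = ‖A cos θ − b‖₂² + ‖A sin θ‖₂² that lies in the set B = {θ : sin θ = 0} ∪ {θ : sin θ ≠ 0 and ‖sin θ‖∞ ≤ η(θ)} must satisfy sin θ* = 0 (i.e., cos θ* ∈ {±1}^N). -/
open Real Finset

/-- Euclidean (ℓ2) norm of a finite real vector. -/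
noncomputable def euclNorm {m : ℕ} (v : Fin m → ℝ) : ℝ := Real.sqrt (∑ j, (v j) ^ 2)

/-- The relaxed loss `L(θ) = ‖A cos θ − b‖₂² + ‖A sin θ‖₂²`. -/
noncomputable def lossL {M N : ℕ} (A : Matrix (Fin M) (Fin N) ℝ) (b : Fin M → ℝ)
    (θ : Fin N → ℝ) : ℝ :=
  (euclNorm (A.mulVec (fun i => Real.cos (θ i)) - b)) ^ 2
    + (euclNorm (A.mulVec (fun i => Real.sin (θ i)))) ^ 2

/-! Rounding each angle to `0` or `π` according to the sign of its cosine gives a point with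
`sin = 0` whose cosine moves by `1 - |cos θᵢ| ≤ sin² θᵢ ≤ ‖sin θ‖∞ |sin θᵢ|` in each coordinate.
So the data term `‖A cos θ - b‖₂` grows by at most `σmax ‖sin θ‖∞ ‖sin θ‖₂`, while the dropped term
`‖A sin θ‖₂²` is at least `σmin² ‖sin θ‖₂²`; the bound `‖sin θ‖∞ ≤ η(θ)` is exactly what makes the
loss decrease by at least `σmin² ‖sin θ‖₂² / 2`, contradicting global minimality. -/

section euclNorm

variable {m : ℕ}

lemma euclNorm_eq_norm_toLp (v : Fin m → ℝ) : euclNorm v = ‖WithLp.toLp 2 v‖ := by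
  simp [EuclideanSpace.norm_eq, euclNorm]

lemma euclNorm_nonneg (v : Fin m → ℝ) : 0 ≤ euclNorm v := Real.sqrt_nonneg _

@[simp]
lemma euclNorm_zero : euclNorm (0 : Fin m → ℝ) = 0 := by
  simp [euclNorm]

lemma euclNorm_pos {v : Fin m → ℝ} (hv : v ≠ 0) : 0 < euclNorm v := by
  rw [euclNorm_eq_norm_toLp, norm_pos_iff]
  exact fun h => hv (congrArg WithLp.ofLp h)

lemma euclNorm_add_le (u v : Fin m → ℝ) : euclNorm (u + v) ≤ euclNorm u + euclNorm v := by
  simpa only [euclNorm_eq_norm_toLp, WithLp.toLp_add] using norm_add_le _ _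

lemma euclNorm_le_mul_of_abs_le {u v : Fin m → ℝ} {k : ℝ} (hk : 0 ≤ k)
    (h : ∀ i, |u i| ≤ k * |v i|) : euclNorm u ≤ k * euclNorm v := by
  have hsq : ∑ i, u i ^ 2 ≤ ∑ i, (k * |v i|) ^ 2 := by
    refine Finset.sum_le_sum fun i _ => ?_
    simpa only [sq_abs] using pow_le_pow_left₀ (abs_nonneg _) (h i) 2
  calc euclNorm u ≤ Real.sqrt (∑ i, (k * |v i|) ^ 2) := Real.sqrt_le_sqrt hsq
    _ = k * euclNorm v := by
      simp only [mul_pow, sq_abs, ← Finset.mul_sum]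
      rw [Real.sqrt_mul (sq_nonneg k), Real.sqrt_sq hk, euclNorm]

end euclNorm

noncomputable def binarizeAngle (x : ℝ) : ℝ := if 0 ≤ cos x then 0 else π

@[simp]
lemma sin_binarizeAngle (x : ℝ) : sin (binarizeAngle x) = 0 := by
  unfold binarizeAngle; split_ifs <;> simp

lemma abs_cos_binarizeAngle_sub_cos_le (x : ℝ) :
    |cos (binarizeAngle x) - cos x| ≤ sin x ^ 2 := by
  have hcos : |cos (binarizeAngle x) - cos x| = 1 - |cos x| := by
    unfold binarizeAngle
    split_ifs with h
    · rw [cos_zero, abs_of_nonneg h, abs_of_nonneg (by linarith [cos_le_one x])]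
    · rw [cos_pi, abs_of_neg (not_le.mp h), abs_of_nonpos (by linarith [neg_one_le_cos x])]
      ring
  rw [hcos, sin_sq, ← sq_abs (cos x)]
  nlinarith [abs_nonneg (cos x), abs_cos_le_one x]

lemma add_mul_sq_lt_of_le_div {r S α β k : ℝ} (hr : 0 ≤ r) (hS : 0 < S) (hα : 0 < α)
    (hβ : 0 < β) (hk₀ : 0 ≤ k) (hk₁ : k ≤ 1) (hk : k ≤ α ^ 2 / (2 * β * (β + 2 * r / S))) :
    (r + β * (k * S)) ^ 2 < r ^ 2 + α ^ 2 * S ^ 2 := by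
  rw [le_div_iff₀ (by positivity)] at hk
  have hk' : 2 * k * β * r * S + k * β ^ 2 * S ^ 2 ≤ α ^ 2 * S ^ 2 / 2 := by
    have hkS := mul_le_mul_of_nonneg_right hk (sq_nonneg S)
    field_simp at hkS ⊢
    nlinarith
  nlinarith [mul_le_mul_of_nonneg_left hk₁ (by positivity : 0 ≤ k * β ^ 2 * S ^ 2), mul_pos hα hS]

section loss

open Matrix

variable {M N : ℕ} (A : Matrix (Fin M) (Fin N) ℝ) (b : Fin M → ℝ) {θ : Fin N → ℝ}

lemma lossL_binarizeAngle_le {σmax k : ℝ}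
    (hmax : ∀ v : Fin N → ℝ, euclNorm (A *ᵥ v) ≤ σmax * euclNorm v) (hσmax : 0 ≤ σmax)
    (hk : 0 ≤ k) (hsin : ∀ i, |sin (θ i)| ≤ k) :
    lossL A b (fun i => binarizeAngle (θ i)) ≤
      (euclNorm (A *ᵥ (fun i => cos (θ i)) - b) + σmax * (k * euclNorm (fun i => sin (θ i)))) ^ 2 := by
  let c : Fin N → ℝ := fun i => cos (θ i)
  let c' : Fin N → ℝ := fun i => cos (binarizeAngle (θ i))
  have hdist : euclNorm (c' - c) ≤ k * euclNorm (fun i => sin (θ i)) := by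
    refine euclNorm_le_mul_of_abs_le hk fun i => (abs_cos_binarizeAngle_sub_cos_le _).trans ?_
    rw [← sq_abs, sq]
    exact mul_le_mul_of_nonneg_right (hsin i) (abs_nonneg _)
  have htri : euclNorm (A *ᵥ c' - b) ≤
      euclNorm (A *ᵥ c - b) + σmax * (k * euclNorm (fun i => sin (θ i))) :=
    calc euclNorm (A *ᵥ c' - b) = euclNorm ((A *ᵥ c - b) + A *ᵥ (c' - c)) := by
          rw [Matrix.mulVec_sub, sub_add_sub_cancel']
      _ ≤ euclNorm (A *ᵥ c - b) + σmax * euclNorm (c' - c) :=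
          (euclNorm_add_le _ _).trans (add_le_add_right (hmax _) _)
      _ ≤ _ := add_le_add_right (mul_le_mul_of_nonneg_left hdist hσmax) _
  have hsin0 : (fun i => sin (binarizeAngle (θ i))) = 0 := funext fun i => sin_binarizeAngle _
  rw [lossL, hsin0, Matrix.mulVec_zero, euclNorm_zero, zero_pow two_ne_zero, add_zero]
  exact pow_le_pow_left₀ (euclNorm_nonneg _) htri 2

lemma lossL_binarizeAngle_lt {σmin σmax : ℝ} (hσ : 0 < σmin)
    (hmin : ∀ v : Fin N → ℝ, σmin * euclNorm v ≤ euclNorm (A *ᵥ v))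
    (hmax : ∀ v : Fin N → ℝ, euclNorm (A *ᵥ v) ≤ σmax * euclNorm v)
    (hsin : (fun i => sin (θ i)) ≠ 0)
    (hη : (⨆ i, |sin (θ i)|) ≤ σmin ^ 2 / (2 * σmax * (σmax +
      2 * euclNorm (A *ᵥ (fun i => cos (θ i)) - b) / euclNorm (fun i => sin (θ i))))) :
    lossL A b (fun i => binarizeAngle (θ i)) < lossL A b θ := by
  set s : Fin N → ℝ := fun i => sin (θ i)
  set r := euclNorm (A *ᵥ (fun i => cos (θ i)) - b)
  have hS : 0 < euclNorm s := euclNorm_pos hsin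
  have hσmax : 0 < σmax :=
    hσ.trans_le (le_of_mul_le_mul_right ((hmin s).trans (hmax s)) hS)
  have hsup : ∀ i, |s i| ≤ ⨆ i, |s i| := le_ciSup (Set.finite_range _).bddAbove
  have hsup₀ : 0 ≤ ⨆ i, |s i| := Real.iSup_nonneg fun i => abs_nonneg _
  have hsup₁ : (⨆ i, |s i|) ≤ 1 := Real.iSup_le (fun i => abs_sin_le_one _) zero_le_one
  have hlower : r ^ 2 + σmin ^ 2 * euclNorm s ^ 2 ≤ lossL A b θ := by
    rw [lossL, ← mul_pow]
    gcongr
    exact hmin s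
  calc lossL A b (fun i => binarizeAngle (θ i))
      ≤ (r + σmax * ((⨆ i, |s i|) * euclNorm s)) ^ 2 :=
        lossL_binarizeAngle_le A b hmax hσmax.le hsup₀ hsup
    _ < r ^ 2 + σmin ^ 2 * euclNorm s ^ 2 :=
        add_mul_sq_lt_of_le_div (euclNorm_nonneg _) hS hσ hσmax hsup₀ hsup₁ hη
    _ ≤ lossL A b θ := hlower

end loss

theorem global_minimizer_in_basin_is_binary {M N : ℕ}
    (A : Matrix (Fin M) (Fin N) ℝ) (b : Fin M → ℝ)
    (σmin σmax : ℝ) (hσ : 0 < σmin)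
    (hmin : ∀ v : Fin N → ℝ, σmin * euclNorm v ≤ euclNorm (A.mulVec v))
    (hmax : ∀ v : Fin N → ℝ, euclNorm (A.mulVec v) ≤ σmax * euclNorm v)
    (θs : Fin N → ℝ)
    (hglobal : ∀ τ : Fin N → ℝ, lossL A b θs ≤ lossL A b τ)
    (hB : (fun i => Real.sin (θs i)) = 0 ∨
      ((fun i => Real.sin (θs i)) ≠ 0 ∧
        (⨆ i, |Real.sin (θs i)|)
          ≤ σmin ^ 2 / (2 * σmax * (σmax +
              2 * euclNorm (A.mulVec (fun i => Real.cos (θs i)) - b)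
                / euclNorm (fun i => Real.sin (θs i)))))) :
    (fun i => Real.sin (θs i)) = 0 := by
  rcases hB with hbinary | ⟨hsin, hη⟩
  · exact hbinary
  · exact absurd (hglobal _) (lossL_binarizeAngle_lt A b hσ hmin hmax hsin hη).not_ge
end

section
/- Regularized local binarization: with A, b as above and β > −σ_min², define L_β(θ) = ‖A cos θ − b‖₂² + ‖A sin θ‖₂² + β‖sin θ‖₂² and η_β(θ) = (σ_min² + β)/(2σ_max(σ_max + 2‖A cos θ − b‖₂/‖sin θ‖₂)). If sin θ ≠ 0 and ‖sin θ‖∞ ≤ η_β(θ), then L_β(θ̃) ≤ L_β(θ) − (1/2)(σ_min² + β)‖sin θ‖₂², where θ̃_i = π·round(θ_i/π). -/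
/-!
Write `cθ`, `cθ'` for `cos θ`, `cos θ̃`. Coordinatewise
`|cθ'ᵢ - cθᵢ| = 1 - |cos θᵢ| ≤ sin² θᵢ ≤ η |sin θᵢ|`, so `t := ‖A (cθ' - cθ)‖ ≤ σ_max η ‖sin θ‖`
(and `t ≤ σ_max ‖sin θ‖`). Hence the data term grows by at most
`t (t + 2 ‖A cθ - b‖) ≤ σ_max η ‖sin θ‖ (σ_max ‖sin θ‖ + 2 ‖A cθ - b‖)`, which is
`(σ_min² + β) ‖sin θ‖² / 2` by the choice of `η`, whereas the regularizer vanishes at `θ̃` and is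
at least `(σ_min² + β) ‖sin θ‖²` at `θ`.
-/

open Real Finset

/-- Euclidean (ℓ2) norm of a finite real vector. -/
noncomputable def enorm2 {m : ℕ} (v : Fin m → ℝ) : ℝ := Real.sqrt (∑ j, (v j) ^ 2)

open Matrix

section enorm2

variable {m : ℕ}

lemma enorm2_eq_norm (v : Fin m → ℝ) :
    enorm2 v = ‖(WithLp.toLp 2 v : EuclideanSpace ℝ (Fin m))‖ := by
  simp [EuclideanSpace.norm_eq, enorm2]

lemma enorm2_nonneg (v : Fin m → ℝ) : 0 ≤ enorm2 v := sqrt_nonneg _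

@[simp]
lemma enorm2_zero : enorm2 (0 : Fin m → ℝ) = 0 := by simp [enorm2]

lemma enorm2_pos {v : Fin m → ℝ} (hv : v ≠ 0) : 0 < enorm2 v := by
  rw [enorm2_eq_norm, norm_pos_iff]
  exact fun h => hv (WithLp.toLp_injective 2 (by simpa using h))

lemma enorm2_add_le (u v : Fin m → ℝ) : enorm2 (u + v) ≤ enorm2 u + enorm2 v := by
  simpa only [enorm2_eq_norm, WithLp.toLp_add] using norm_add_le _ _

lemma enorm2_le_mul_of_abs_le {u w : Fin m → ℝ} {c : ℝ} (hc : 0 ≤ c)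
    (h : ∀ i, |u i| ≤ c * |w i|) : enorm2 u ≤ c * enorm2 w := by
  rw [enorm2, enorm2, ← sqrt_sq hc, ← sqrt_mul (sq_nonneg c), mul_sum]
  refine sqrt_le_sqrt (sum_le_sum fun i _ => ?_)
  rw [← mul_pow]
  exact sq_le_sq.2 (by rw [abs_mul, abs_of_nonneg hc]; exact h i)

end enorm2

lemma abs_cos_pi_mul_round_sub_cos (x : ℝ) :
    |cos (π * round (x / π)) - cos x| = 1 - |cos x| := by
  set k := round (x / π)
  have hd : |k * π - x| ≤ π / 2 := by
    have h := abs_sub_round (x / π)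
    rw [abs_sub_comm] at h
    calc |k * π - x| = |(k - x / π) * π| := by rw [sub_mul, div_mul_cancel₀ x pi_ne_zero]
      _ = |k - x / π| * π := by rw [abs_mul, abs_of_pos pi_pos]
      _ ≤ 1 / 2 * π := by gcongr
      _ = π / 2 := by ring
  have hcos : 0 ≤ cos (k * π - x) :=
    cos_nonneg_of_neg_pi_div_two_le_of_le (neg_le_of_abs_le hd) (le_of_abs_le hd)
  have hx : cos x = (-1) ^ k * cos (k * π - x) := by rw [← cos_int_mul_pi_sub, sub_sub_cancel]
  rw [mul_comm π, cos_int_mul_pi, hx, ← mul_one_sub, abs_mul, abs_mul, abs_neg_one_zpow, one_mul,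
    one_mul, abs_of_nonneg hcos, abs_of_nonneg (sub_nonneg.2 (cos_le_one _))]

lemma one_sub_abs_cos_le_sin_sq (x : ℝ) : 1 - |cos x| ≤ sin x ^ 2 := by
  nlinarith [sin_sq_add_cos_sq x, abs_cos_le_one x, abs_nonneg (cos x), sq_abs (cos x)]

lemma enorm2_cos_round_sub_cos_le {N : ℕ} (θ : Fin N → ℝ) {η : ℝ} (hη₀ : 0 ≤ η)
    (hη : ∀ i, |sin (θ i)| ≤ η) :
    enorm2 (fun i => cos (π * round (θ i / π)) - cos (θ i)) ≤ η * enorm2 (fun i => sin (θ i)) :=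
  enorm2_le_mul_of_abs_le hη₀ fun i =>
    calc |cos (π * round (θ i / π)) - cos (θ i)| = 1 - |cos (θ i)| :=
          abs_cos_pi_mul_round_sub_cos _
      _ ≤ |sin (θ i)| * |sin (θ i)| := by rw [← sq, sq_abs]; exact one_sub_abs_cos_le_sin_sq _
      _ ≤ η * |sin (θ i)| := by gcongr; exact hη i

lemma enorm2_mulVec_cos_round_sub_sq_le {M N : ℕ} (A : Matrix (Fin M) (Fin N) ℝ) (b : Fin M → ℝ)
    {σ η : ℝ} (hσ : 0 ≤ σ) (hA : ∀ v, enorm2 (A *ᵥ v) ≤ σ * enorm2 v) (θ : Fin N → ℝ)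
    (hη₀ : 0 ≤ η) (hη : ∀ i, |sin (θ i)| ≤ η) :
    enorm2 (A *ᵥ (fun i => cos (π * round (θ i / π))) - b) ^ 2
      ≤ enorm2 (A *ᵥ (fun i => cos (θ i)) - b) ^ 2
        + σ * (η * enorm2 fun i => sin (θ i))
          * (σ * enorm2 (fun i => sin (θ i)) + 2 * enorm2 (A *ᵥ (fun i => cos (θ i)) - b)) := by
  set cθ : Fin N → ℝ := fun i => cos (θ i)
  set cθ' : Fin N → ℝ := fun i => cos (π * round (θ i / π))
  set s := enorm2 fun i => sin (θ i)
  set r := enorm2 (A *ᵥ cθ - b)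
  set t := enorm2 (A *ᵥ (cθ' - cθ))
  have ht_η : t ≤ σ * (η * s) :=
    (hA _).trans (by gcongr; exact enorm2_cos_round_sub_cos_le θ hη₀ hη)
  have ht_one : t ≤ σ * s := (hA _).trans (by
    gcongr
    exact (enorm2_cos_round_sub_cos_le θ zero_le_one fun _ => abs_sin_le_one _).trans_eq
      (one_mul s))
  have hround : enorm2 (A *ᵥ cθ' - b) ≤ r + t := by
    rw [show A *ᵥ cθ' - b = (A *ᵥ cθ - b) + A *ᵥ (cθ' - cθ) by rw [mulVec_sub]; abel]
    exact enorm2_add_le _ _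
  have ht : 0 ≤ t := enorm2_nonneg _
  have hr : 0 ≤ r := enorm2_nonneg _
  calc enorm2 (A *ᵥ cθ' - b) ^ 2 ≤ (r + t) ^ 2 := by gcongr; exact enorm2_nonneg _
    _ = r ^ 2 + t * (t + 2 * r) := by ring
    _ ≤ r ^ 2 + σ * (η * s) * (σ * s + 2 * r) := by
      gcongr r ^ 2 + ?_
      exact mul_le_mul ht_η (by linarith) (by linarith)
        (mul_nonneg hσ (mul_nonneg hη₀ (enorm2_nonneg _)))

theorem regularized_local_binarization_general {M N : ℕ}
    (A : Matrix (Fin M) (Fin N) ℝ) (b : Fin M → ℝ)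
    (σmin σmax β : ℝ) (hσ : 0 < σmin)
    (hmin : ∀ v : Fin N → ℝ, σmin * enorm2 v ≤ enorm2 (A.mulVec v))
    (hmax : ∀ v : Fin N → ℝ, enorm2 (A.mulVec v) ≤ σmax * enorm2 v)
    (θ : Fin N → ℝ)
    (hsin : (fun i => Real.sin (θ i)) ≠ 0)
    (hsup : (⨆ i, |Real.sin (θ i)|)
      ≤ (σmin ^ 2 + β) / (2 * σmax * (σmax +
          2 * enorm2 (A.mulVec (fun i => Real.cos (θ i)) - b)
            / enorm2 (fun i => Real.sin (θ i))))) :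
    (enorm2 (A.mulVec (fun i => Real.cos (Real.pi * (round (θ i / Real.pi) : ℤ))) - b)) ^ 2
      + (enorm2 (A.mulVec (fun i => Real.sin (Real.pi * (round (θ i / Real.pi) : ℤ))))) ^ 2
      + β * (enorm2 (fun i => Real.sin (Real.pi * (round (θ i / Real.pi) : ℤ)))) ^ 2
    ≤ (enorm2 (A.mulVec (fun i => Real.cos (θ i)) - b)) ^ 2
      + (enorm2 (A.mulVec (fun i => Real.sin (θ i)))) ^ 2
      + β * (enorm2 (fun i => Real.sin (θ i))) ^ 2
      - (1 / 2) * (σmin ^ 2 + β) * (enorm2 (fun i => Real.sin (θ i))) ^ 2 := by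
  set s := enorm2 fun i => sin (θ i)
  set r := enorm2 (A *ᵥ (fun i => cos (θ i)) - b)
  set η := (σmin ^ 2 + β) / (2 * σmax * (σmax + 2 * r / s))
  obtain ⟨i₀, -⟩ := Function.ne_iff.mp hsin
  have hs : 0 < s := enorm2_pos hsin
  have hσmax : 0 < σmax :=
    pos_of_mul_pos_left ((mul_pos hσ hs).trans_le ((hmin _).trans (hmax _))) hs.le
  have hη : ∀ i, |sin (θ i)| ≤ η := fun i => (le_ciSup (Set.finite_range _).bddAbove i).trans hsup
  have hdata :=
    enorm2_mulVec_cos_round_sub_sq_le A b hσmax.le hmax θ ((abs_nonneg _).trans (hη i₀)) hη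
  have hη_eq : σmax * (η * s) * (σmax * s + 2 * r) = (σmin ^ 2 + β) * s ^ 2 / 2 := by
    have hr : 0 ≤ r := enorm2_nonneg _
    have : σmax * s + 2 * r ≠ 0 := by positivity
    simp only [η]; field_simp
  have hAsin : (σmin * s) ^ 2 ≤ enorm2 (A *ᵥ fun i => sin (θ i)) ^ 2 :=
    pow_le_pow_left₀ (mul_pos hσ hs).le (hmin _) 2
  have hsin_round : (fun i => sin (π * round (θ i / π))) = 0 :=
    funext fun i => by rw [mul_comm]; exact sin_int_mul_pi _
  rw [hsin_round, mulVec_zero, enorm2_zero, enorm2_zero]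
  linarith

theorem regularized_local_binarization {M N : ℕ}
    (A : Matrix (Fin M) (Fin N) ℝ) (b : Fin M → ℝ)
    (σmin σmax β : ℝ) (hσ : 0 < σmin) (hβ : -σmin ^ 2 < β)
    (hmin : ∀ v : Fin N → ℝ, σmin * enorm2 v ≤ enorm2 (A.mulVec v))
    (hmax : ∀ v : Fin N → ℝ, enorm2 (A.mulVec v) ≤ σmax * enorm2 v)
    (θ : Fin N → ℝ)
    (hsin : (fun i => Real.sin (θ i)) ≠ 0)
    (hsup : (⨆ i, |Real.sin (θ i)|)
      ≤ (σmin ^ 2 + β) / (2 * σmax * (σmax +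
          2 * enorm2 (A.mulVec (fun i => Real.cos (θ i)) - b)
            / enorm2 (fun i => Real.sin (θ i))))) :
    (enorm2 (A.mulVec (fun i => Real.cos (Real.pi * (round (θ i / Real.pi) : ℤ))) - b)) ^ 2
      + (enorm2 (A.mulVec (fun i => Real.sin (Real.pi * (round (θ i / Real.pi) : ℤ))))) ^ 2
      + β * (enorm2 (fun i => Real.sin (Real.pi * (round (θ i / Real.pi) : ℤ)))) ^ 2
    ≤ (enorm2 (A.mulVec (fun i => Real.cos (θ i)) - b)) ^ 2
      + (enorm2 (A.mulVec (fun i => Real.sin (θ i)))) ^ 2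
      + β * (enorm2 (fun i => Real.sin (θ i))) ^ 2
      - (1 / 2) * (σmin ^ 2 + β) * (enorm2 (fun i => Real.sin (θ i))) ^ 2 :=
  regularized_local_binarization_general A b σmin σmax β hσ hmin hmax θ hsin hsup
end
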